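/- Let n, m, t be positive integers and ε > 0, ε′ ≥ 0, δ ≥ 0, δ₀ ≥ 0 reals with ε′ + δ₀ < 1/2. Suppose f : {0,1}^n → ℝ is (ε,δ₀)-concentrated at μ ∈ ℝ and Samp : {0,1}^m → ({0,1}^n)^t is an averaging (ε′,δ)-sampler for Boolean functions on n bits. Define g : {0,1}^m → ℝ by letting g(x) be the ⌈(t+1)/2⌉-th smallest element, counted with multiplicity, of the list (f(Samp(x)_1),…,f(Samp(x)_t)). Then g is (ε,δ)-concentrated at μ. -/

import Mathlib

/-!
Let `B` be the set of inputs on which `f` is more than `ε` away from `μ`; its density is at most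
`δ₀`. Whenever the sampler estimates the density of `B` to within `ε'`, fewer than `t/2` of the
sample points fall in `B`. The median, the entry at index `⌊t/2⌋` of the sorted samples, then lies
within `ε` of `μ`: were it below `μ - ε`, so would be the `⌊t/2⌋ + 1` entries up to it, and were it
above `μ + ε`, so would be the `t - ⌊t/2⌋` entries from it on. Hence `g` is far from `μ` only where
the sampler fails, which happens with probability at most `δ`.
-/
open Classical

/-- Probability of `P` under the uniform distribution on a finite type. -/
noncomputable def pr {α : Type*} [Fintype α] (P : α → Prop) : ℝ :=
  ((Finset.univ.filter P).card : ℝ) / (Fintype.card α : ℝ)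

/-- `f : {0,1}^n → ℝ` is `(ε,δ)`-concentrated at `μ`. -/
def Concentrated1 (n : ℕ) (ε δ : ℝ) (f : (Fin n → Bool) → ℝ) (μ : ℝ) : Prop :=
  pr (fun X : Fin n → Bool => |f X - μ| > ε) ≤ δ

/-- `Samp` is an averaging `(ε,δ)`-sampler for Boolean functions on `n` bits. -/
def IsAvgSampler (n m t : ℕ) (ε δ : ℝ)
    (Samp : (Fin m → Bool) → Fin t → (Fin n → Bool)) : Prop :=
  ∀ C : (Fin n → Bool) → Bool,
    pr (fun X : Fin m → Bool =>
      |(∑ x : Fin n → Bool, if C x then (1 : ℝ) else 0) / 2 ^ n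
        - (∑ i : Fin t, if C (Samp X i) then (1 : ℝ) else 0) / t| > ε) ≤ δ

open Classical in
/-- The `⌈(t+1)/2⌉`-th smallest element (counted with multiplicity) of a list of
length `t` of reals; i.e. the element at 0-based index `t/2` of the sorted list. -/
noncomputable def medianList (l : List ℝ) : ℝ :=
  (l.insertionSort (fun a b => a ≤ b)).getD (l.length / 2) 0

namespace List

lemma countP_ofFn {β : Type*} {t : ℕ} (g : Fin t → β) (q : β → Bool) :
    ((ofFn g).countP q : ℝ) = ∑ i : Fin t, if q (g i) then (1 : ℝ) else 0 := by
  induction t with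
  | zero => simp
  | succ k ih =>
    rw [ofFn_succ, countP_cons, Fin.sum_univ_succ, Nat.cast_add, ih (fun i => g i.succ)]
    by_cases h : q (g 0) <;> simp [h, add_comm]

variable {α : Type*} [LinearOrder α] {s : List α}

lemma Pairwise.succ_le_countP_lt_of_getElem_lt (hs : s.Pairwise (· ≤ ·)) {i : ℕ}
    (hi : i < s.length) {v : α} (h : s[i] < v) : i + 1 ≤ s.countP (· < v) := by
  have hprefix : ∀ a ∈ s.take (i + 1), a < v := by
    intro a ha
    obtain ⟨j, hj, rfl⟩ := mem_take_iff_getElem.mp ha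
    exact lt_of_le_of_lt (hs.rel_get_of_le (a := ⟨j, by omega⟩) (b := ⟨i, hi⟩)
      (Fin.mk_le_mk.mpr (by omega))) h
  calc i + 1 = (s.take (i + 1)).countP (· < v) := by
        rw [countP_eq_length.mpr (by simpa using hprefix), length_take]; omega
    _ ≤ s.countP (· < v) := (take_sublist _ _).countP_le

lemma Pairwise.length_sub_le_countP_gt_of_lt_getElem (hs : s.Pairwise (· ≤ ·)) {i : ℕ}
    (hi : i < s.length) {v : α} (h : v < s[i]) : s.length - i ≤ s.countP (v < ·) := by
  have hsuffix : ∀ a ∈ s.drop i, v < a := by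
    intro a ha
    obtain ⟨j, hj, rfl⟩ := mem_drop_iff_getElem.mp ha
    exact lt_of_lt_of_le h (hs.rel_get_of_le (a := ⟨i, hi⟩) (b := ⟨i + j, by omega⟩)
      (Fin.mk_le_mk.mpr (by omega)))
  calc s.length - i = (s.drop i).countP (v < ·) := by
        rw [countP_eq_length.mpr (by simpa using hsuffix), length_drop]
    _ ≤ s.countP (v < ·) := (drop_sublist _ _).countP_le

end List

lemma medianList_mem_Icc {l : List ℝ} {a b : ℝ}
    (h : 2 * l.countP (· ∉ Set.Icc a b) < l.length) : medianList l ∈ Set.Icc a b := by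
  set s := l.insertionSort (· ≤ ·)
  have hperm : s.Perm l := l.perm_insertionSort _
  have hsorted : s.Pairwise (· ≤ ·) := l.pairwise_insertionSort _
  have hlen : s.length = l.length := hperm.length_eq
  have hi : l.length / 2 < s.length := by omega
  have hcount : ∀ p : ℝ → Bool, (∀ x, p x → x ∉ Set.Icc a b) →
      2 * s.countP p < l.length := by
    intro p hp
    have : s.countP p ≤ l.countP (· ∉ Set.Icc a b) := by
      rw [hperm.countP_eq]
      exact List.countP_mono_left fun x _ hx => decide_eq_true (hp x hx)
    omega
  have hmedian : medianList l = s[l.length / 2] := List.getD_eq_getElem _ _ hi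
  rw [hmedian]
  constructor
  · by_contra! hlow
    have := hsorted.succ_le_countP_lt_of_getElem_lt hi hlow
    have := hcount (· < a) fun x hx hmem => (of_decide_eq_true hx).not_ge hmem.1
    omega
  · by_contra! hhigh
    have := hsorted.length_sub_le_countP_gt_of_lt_getElem hi hhigh
    have := hcount (b < ·) fun x hx hmem => (of_decide_eq_true hx).not_ge hmem.2
    omega

lemma abs_medianList_sub_le {l : List ℝ} {μ ε : ℝ}
    (h : 2 * l.countP (fun x => ε < |x - μ|) < l.length) : |medianList l - μ| ≤ ε := by
  rw [abs_sub_comm, Set.mem_Icc_iff_abs_le]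
  refine medianList_mem_Icc (lt_of_le_of_lt ?_ h)
  gcongr 2 * ?_
  refine List.countP_mono_left fun x _ hx => decide_eq_true (lt_of_not_ge fun hle => ?_)
  rw [abs_sub_comm, Set.mem_Icc_iff_abs_le] at hle
  exact of_decide_eq_true hx hle

lemma pr_mono {α : Type*} [Fintype α] {P Q : α → Prop} (h : ∀ a, P a → Q a) :
    pr P ≤ pr Q := by
  unfold pr
  gcongr with a
  exact h a

lemma pr_eq_sum_ite {α : Type*} [Fintype α] (P : α → Prop) [DecidablePred P] :
    pr P = (∑ a, if P a then (1 : ℝ) else 0) / Fintype.card α := by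
  rw [pr, Finset.sum_boole]
  congr

lemma Concentrated1.sum_ite_div_le {n : ℕ} {ε δ μ : ℝ} {f : (Fin n → Bool) → ℝ}
    (hf : Concentrated1 n ε δ f μ) :
    (∑ x : Fin n → Bool, if decide (ε < |f x - μ|) then (1 : ℝ) else 0) / 2 ^ n ≤ δ := by
  simpa [Concentrated1, pr_eq_sum_ite, Fintype.card_fun] using hf

theorem median_amplification_general (n m t : ℕ) (ht : 0 < t)
    (ε ε' δ δ₀ : ℝ)
    (hlt : ε' + δ₀ < 1 / 2)
    (f : (Fin n → Bool) → ℝ) (μ : ℝ) (hf : Concentrated1 n ε δ₀ f μ)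
    (Samp : (Fin m → Bool) → Fin t → (Fin n → Bool))
    (hS : IsAvgSampler n m t ε' δ Samp) :
    Concentrated1 m ε δ
      (fun x => medianList (List.ofFn fun i => f (Samp x i))) μ := by
  let far : (Fin n → Bool) → Bool := fun y => ε < |f y - μ|
  have hdensity := hf.sum_ite_div_le
  refine (pr_mono fun x hfar => ?_).trans (hS far)
  by_contra! hgood
  let samples := List.ofFn fun i => f (Samp x i)
  have hfew : (∑ i : Fin t, if far (Samp x i) then (1 : ℝ) else 0) / t < 1 / 2 := by
    linarith [(abs_le.mp hgood).1]
  have hcount : 2 * samples.countP (fun y => ε < |y - μ|) < samples.length := by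
    have hcast := List.countP_ofFn (fun i => f (Samp x i)) (fun y => ε < |y - μ|)
    rw [div_lt_iff₀ (by exact_mod_cast ht)] at hfew
    rw [List.length_ofFn]
    exact_mod_cast (show 2 * (samples.countP (fun y => ε < |y - μ|) : ℝ) < t by linarith)
  exact (abs_medianList_sub_le hcount).not_gt hfar

/-- taking the median of `f` over the sample points of an averaging
`(ε′,δ)`-sampler turns an `(ε,δ₀)`-concentrated function into an `(ε,δ)`-concentrated one,
provided `ε′ + δ₀ < 1/2`. -/
theorem median_amplification (n m t : ℕ) (hn : 0 < n) (hm : 0 < m) (ht : 0 < t)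
    (ε ε' δ δ₀ : ℝ) (hε : 0 < ε) (hε' : 0 ≤ ε') (hδ : 0 ≤ δ) (hδ₀ : 0 ≤ δ₀)
    (hlt : ε' + δ₀ < 1 / 2)
    (f : (Fin n → Bool) → ℝ) (μ : ℝ) (hf : Concentrated1 n ε δ₀ f μ)
    (Samp : (Fin m → Bool) → Fin t → (Fin n → Bool))
    (hS : IsAvgSampler n m t ε' δ Samp) :
    Concentrated1 m ε δ
      (fun x => medianList (List.ofFn fun i => f (Samp x i))) μ :=
  median_amplification_general n m t ht ε ε' δ δ₀ hlt f μ hf Samp hS
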